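/- Let Γ ⊂ ℝⁿ be closed nonempty, B a ball centered on Γ, and E₁ = {X ∈ 2B : 10 dist(X,Γ) ≤ dist(X,B) ≤ 20 dist(X,Γ)}. Then for every z ∈ Γ, with the cone γ(z) = {X : |X−z| ≤ 2 dist(X,Γ)}, one has ∫_{γ(z)} 1_{E₁}(X) dist(X,Γ)^{−n} dX ≤ C for a dimensional constant C. In particular, along the proof one shows: for X ∈ γ(z) ∩ E₁, (1/24) dist(z,B) ≤ dist(X,Γ) ≤ (1/8) dist(z,B) and |X−z| ≤ (1/4) dist(z,B). -/

import Mathlib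

open MeasureTheory Metric Set Module

/-! Since `dist(·, B)` is 1-Lipschitz, on `γ(z) ∩ E₁` both `dist(X, B)` and `dist(X, Γ)` are
comparable to `ρ = dist(z, B)`, and `X` lies within `ρ / 4` of `z`. The integrand is then at
most `(24 / ρ)ⁿ` on a set of volume at most `(ρ / 4)ⁿ |B(0,1)|`, and the powers of `ρ` cancel. -/

theorem whitney_cone_bounds {α : Type*} [PseudoMetricSpace α] {Γ B : Set α} {X z : α}
    (hcone : dist X z ≤ 2 * infDist X Γ) (h10 : 10 * infDist X Γ ≤ infDist X B)
    (h20 : infDist X B ≤ 20 * infDist X Γ) :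
    (1 / 24) * infDist z B ≤ infDist X Γ ∧ infDist X Γ ≤ (1 / 8) * infDist z B ∧
      dist X z ≤ (1 / 4) * infDist z B := by
  have hzX : infDist z B ≤ infDist X B + dist z X := infDist_le_infDist_add_dist
  have hXz : infDist X B ≤ infDist z B + dist X z := infDist_le_infDist_add_dist
  rw [dist_comm] at hzX
  exact ⟨by linarith, by linarith, by linarith⟩

theorem norm_rpow_neg_natCast_le_inv_pow {δ t : ℝ} (hδ : 0 < δ) (ht : δ ≤ t) (n : ℕ) :
    ‖t ^ (-(n : ℝ))‖ ≤ δ⁻¹ ^ n := by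
  have ht0 : 0 < t := hδ.trans_le ht
  rw [Real.rpow_neg ht0.le, Real.rpow_natCast, Real.norm_of_nonneg (by positivity), inv_pow]
  gcongr

theorem setIntegral_rpow_neg_finrank_le {E : Type*} [NormedAddCommGroup E] [NormedSpace ℝ E]
    [MeasurableSpace E] [BorelSpace E] [FiniteDimensional ℝ E] (μ : Measure E)
    [μ.IsAddHaarMeasure] {s : Set E} {z : E} {R δ : ℝ} {g : E → ℝ} (hδ : 0 < δ) (hR : 0 ≤ R)
    (hs : s ⊆ closedBall z R) (hg : ∀ X ∈ s, δ ≤ g X) :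
    ∫ X in s, g X ^ (-(finrank ℝ E : ℝ)) ∂μ ≤ (R / δ) ^ finrank ℝ E * μ.real (ball 0 1) := by
  have hvol : μ.real s ≤ R ^ finrank ℝ E * μ.real (ball 0 1) := by
    rw [← Measure.addHaar_real_closedBall μ z hR]
    exact measureReal_mono hs measure_closedBall_lt_top.ne
  calc ∫ X in s, g X ^ (-(finrank ℝ E : ℝ)) ∂μ
      ≤ δ⁻¹ ^ finrank ℝ E * μ.real s :=
        (le_abs_self _).trans <| norm_setIntegral_le_of_norm_le_const
          ((measure_mono hs).trans_lt measure_closedBall_lt_top)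
          fun X hX => norm_rpow_neg_natCast_le_inv_pow hδ (hg X hX) _
    _ ≤ δ⁻¹ ^ finrank ℝ E * (R ^ finrank ℝ E * μ.real (ball 0 1)) := by gcongr
    _ = (R / δ) ^ finrank ℝ E * μ.real (ball 0 1) := by
      rw [← mul_assoc, ← mul_pow, inv_mul_eq_div]

theorem stmt9 (n : ℕ) :
    ∃ C > 0, ∀ (Γ : Set (EuclideanSpace ℝ (Fin n))), IsClosed Γ → Γ.Nonempty →
      ∀ x ∈ Γ, ∀ r > 0, ∀ z ∈ Γ,
      (∫ X in {X | X ∉ Γ ∧ ‖X - z‖ ≤ 2 * infDist X Γ} ∩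
          {X ∈ ball x (2 * r) |
            10 * infDist X Γ ≤ infDist X (closedBall x r) ∧
            infDist X (closedBall x r) ≤ 20 * infDist X Γ},
        (infDist X Γ) ^ (-(n : ℝ)) ≤ C) ∧
      ∀ X, X ∉ Γ → ‖X - z‖ ≤ 2 * infDist X Γ → X ∈ ball x (2 * r) →
        10 * infDist X Γ ≤ infDist X (closedBall x r) →
        infDist X (closedBall x r) ≤ 20 * infDist X Γ →
        (1 / 24) * infDist z (closedBall x r) ≤ infDist X Γ ∧
        infDist X Γ ≤ (1 / 8) * infDist z (closedBall x r) ∧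
        ‖X - z‖ ≤ (1 / 4) * infDist z (closedBall x r) := by
  have hunit : 0 < volume.real (ball (0 : EuclideanSpace ℝ (Fin n)) 1) :=
    ENNReal.toReal_pos (measure_ball_pos volume 0 one_pos).ne' measure_ball_lt_top.ne
  refine ⟨6 ^ n * volume.real (ball (0 : EuclideanSpace ℝ (Fin n)) 1), by positivity, ?_⟩
  intro Γ _ _ x _ r _ z hz
  set ρ := infDist z (closedBall x r)
  have hbounds : ∀ X, X ∉ Γ → ‖X - z‖ ≤ 2 * infDist X Γ → X ∈ ball x (2 * r) →
      10 * infDist X Γ ≤ infDist X (closedBall x r) →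
      infDist X (closedBall x r) ≤ 20 * infDist X Γ →
      (1 / 24) * ρ ≤ infDist X Γ ∧ infDist X Γ ≤ (1 / 8) * ρ ∧ ‖X - z‖ ≤ (1 / 4) * ρ := by
    intro X _ hcone _ h10 h20
    rw [← dist_eq_norm] at hcone ⊢
    exact whitney_cone_bounds hcone h10 h20
  refine ⟨?_, hbounds⟩
  set s := {X | X ∉ Γ ∧ ‖X - z‖ ≤ 2 * infDist X Γ} ∩
      {X ∈ ball x (2 * r) | 10 * infDist X Γ ≤ infDist X (closedBall x r) ∧
        infDist X (closedBall x r) ≤ 20 * infDist X Γ}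
  rcases s.eq_empty_or_nonempty with hs | ⟨X₀, ⟨hX₀Γ, hX₀cone⟩, hX₀ball, hX₀10, hX₀20⟩
  · rw [hs, Measure.restrict_empty, integral_zero_measure]
    positivity
  -- a point of `s` lies off `Γ ∋ z`, so the bound `‖X₀ - z‖ ≤ ρ / 4` forces `ρ > 0`
  have hρ : 0 < ρ := by
    have hnear := (hbounds X₀ hX₀Γ hX₀cone hX₀ball hX₀10 hX₀20).2.2
    have hne : 0 < ‖X₀ - z‖ := norm_sub_pos_iff.mpr fun h => hX₀Γ (h ▸ hz)
    linarith
  have hsub : s ⊆ closedBall z (ρ / 4) := fun X ⟨⟨hXΓ, hXcone⟩, hXball, hX10, hX20⟩ => by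
    rw [mem_closedBall, dist_eq_norm]
    linarith [(hbounds X hXΓ hXcone hXball hX10 hX20).2.2]
  have hlower : ∀ X ∈ s, ρ / 24 ≤ infDist X Γ :=
    fun X ⟨⟨hXΓ, hXcone⟩, hXball, hX10, hX20⟩ => by
    linarith [(hbounds X hXΓ hXcone hXball hX10 hX20).1]
  have h := setIntegral_rpow_neg_finrank_le volume (by positivity) (by positivity) hsub hlower
  rwa [finrank_euclideanSpace_fin, show ρ / 4 / (ρ / 24) = 6 by field_simp; norm_num] at h
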